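/- arXiv:1510.02228 — 2 statements merged into one kernel-verified Lean document; each statement's English description precedes it below -/
import Mathlib

section
/- Let u be a C¹ vector field on an open set of ℝ³ and f a C² function of (t, x₁, x₂). Define N = (−∂₁f, −∂₂f, 1) and let ū(t,x') = u(t, x', f(t,x')) denote the trace of u on the graph x₃ = f. Then at points on the graph: (u·∇u)·N − (∂₃u·N)(u·N) = ū₁ ∂₁(ū·N) + ū₂ ∂₂(ū·N) + Σ_{i,j=1,2} ū_i ū_j ∂_i∂_j f, where ∂₁, ∂₂ on the left act on the spatial variables of u while on the right they are derivatives in x' applied to the composed functions. -/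
/-! By the chain rule, `∂ᵢūⱼ = ∂ᵢuⱼ + ∂ᵢf ∂₃uⱼ` on the graph, and `∂ᵢN = (−∂ᵢ∂₁f, −∂ᵢ∂₂f, 0)`.
Since `u·N = u₃ − u₁∂₁f − u₂∂₂f`, subtracting `(∂₃u·N)(u·N)` from `(u·∇u)·N` replaces `u₃∂₃u`
by `−Σᵢ uᵢ∂ᵢf ∂₃u`, so the left side equals `Σᵢ ūᵢ (∂ᵢū·N)`. The product rule for `∂ᵢ(ū·N)`
accounts for the rest: its `ū·∂ᵢN` part is exactly the Hessian term with the opposite sign. -/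

noncomputable section

/-- partial derivative in the `i`-th coordinate direction, ℝ³ domain -/
def pd3 (i : Fin 3) (g : (Fin 3 → ℝ) → ℝ) (x : Fin 3 → ℝ) : ℝ :=
  fderiv ℝ g x (Pi.single i 1)

/-- partial derivative in the `i`-th coordinate direction, ℝ² domain -/
def pd2 (i : Fin 2) (g : (Fin 2 → ℝ) → ℝ) (x : Fin 2 → ℝ) : ℝ :=
  fderiv ℝ g x (Pi.single i 1)

/-- the point `(x', z)` of ℝ³ -/
def emb (x' : Fin 2 → ℝ) (z : ℝ) : Fin 3 → ℝ := ![x' 0, x' 1, z]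

/-- the (non-normalized) normal `N = (−∂₁f, −∂₂f, 1)` of the graph of `f` -/
def Nf (f : (Fin 2 → ℝ) → ℝ) (y : Fin 2 → ℝ) : Fin 3 → ℝ :=
  ![-(pd2 0 f y), -(pd2 1 f y), 1]

lemma pd2_sum_mul {ι : Type*} (s : Finset ι) {a b : ι → (Fin 2 → ℝ) → ℝ} {x : Fin 2 → ℝ}
    (ha : ∀ j ∈ s, DifferentiableAt ℝ (a j) x) (hb : ∀ j ∈ s, DifferentiableAt ℝ (b j) x)
    (i : Fin 2) :
    pd2 i (fun y => ∑ j ∈ s, a j y * b j y) x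
      = ∑ j ∈ s, (a j x * pd2 i (b j) x + pd2 i (a j) x * b j x) := by
  rw [pd2, fderiv_fun_sum (A := fun j y => a j y * b j y) fun j hj => (ha j hj).mul (hb j hj),
    FunLike.coe_sum, Finset.sum_apply]
  refine Finset.sum_congr rfl fun j hj => ?_
  rw [fderiv_fun_mul (ha j hj) (hb j hj), add_apply, smul_apply, smul_apply, smul_eq_mul,
    smul_eq_mul, pd2, pd2, mul_comm (b j x)]

lemma hasFDerivAt_graph {f : (Fin 2 → ℝ) → ℝ} {x : Fin 2 → ℝ} (hf : DifferentiableAt ℝ f x) :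
    HasFDerivAt (fun y => emb y (f y))
      (ContinuousLinearMap.pi ![ContinuousLinearMap.proj 0, ContinuousLinearMap.proj 1,
        fderiv ℝ f x]) x := by
  rw [hasFDerivAt_pi']
  intro j
  rw [ContinuousLinearMap.proj_pi]
  fin_cases j
  · exact hasFDerivAt_apply 0 x
  · exact hasFDerivAt_apply 1 x
  · exact hf.hasFDerivAt

lemma pd2_comp_graph {f : (Fin 2 → ℝ) → ℝ} {g : (Fin 3 → ℝ) → ℝ} {x : Fin 2 → ℝ}
    (hf : DifferentiableAt ℝ f x) (hg : DifferentiableAt ℝ g (emb x (f x))) (i : Fin 2) :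
    pd2 i (fun y => g (emb y (f y))) x
      = pd3 i.castSucc g (emb x (f x)) + pd2 i f x * pd3 2 g (emb x (f x)) := by
  have hdir : (ContinuousLinearMap.pi ![ContinuousLinearMap.proj 0, ContinuousLinearMap.proj 1,
      fderiv ℝ f x]) (Pi.single i 1)
      = (Pi.single i.castSucc 1 : Fin 3 → ℝ) + pd2 i f x • (Pi.single 2 1 : Fin 3 → ℝ) := by
    funext j
    fin_cases i <;> fin_cases j <;> simp [pd2]
  have hcomp : HasFDerivAt (fun y => g (emb y (f y))) _ x :=
    hg.hasFDerivAt.comp x (hasFDerivAt_graph hf)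
  rw [pd2, hcomp.fderiv, ContinuousLinearMap.comp_apply,
    hdir, map_add, map_smul, pd3, pd3, smul_eq_mul]

lemma pd2_Nf_castSucc (f : (Fin 2 → ℝ) → ℝ) (x : Fin 2 → ℝ) (i j : Fin 2) :
    pd2 i (fun y => Nf f y j.castSucc) x = -pd2 i (pd2 j f) x := by
  have hN : (fun y => Nf f y j.castSucc) = fun y => -pd2 j f y := by
    funext y
    fin_cases j <;> rfl
  rw [hN, pd2, fderiv_fun_neg]
  rfl

lemma pd2_Nf_last (f : (Fin 2 → ℝ) → ℝ) (x : Fin 2 → ℝ) (i : Fin 2) :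
    pd2 i (fun y => Nf f y (Fin.last 2)) x = 0 := by
  simp [pd2, Nf]

lemma differentiable_Nf {f : (Fin 2 → ℝ) → ℝ} (hf : ContDiff ℝ 2 f) (j : Fin 3) :
    Differentiable ℝ (fun y => Nf f y j) := by
  have hpd : ∀ k : Fin 2, Differentiable ℝ (pd2 k f) := fun k =>
    ((hf.fderiv_right le_rfl).differentiable one_ne_zero).clm_apply (differentiable_const _)
  fin_cases j
  · exact (hpd 0).neg
  · exact (hpd 1).neg
  · exact differentiable_const 1

/-- Lemma on traces: `(u·∇u)·N − (∂₃u·N)(u·N) =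
ū₁ ∂₁(ū·N) + ū₂ ∂₂(ū·N) + Σ_{i,j=1,2} ū_i ū_j ∂_i∂_j f` on the graph `x₃ = f`. -/
theorem stmt2 (u : (Fin 3 → ℝ) → Fin 3 → ℝ) (f : (Fin 2 → ℝ) → ℝ)
    (hu : ContDiff ℝ 1 u) (hf : ContDiff ℝ 2 f) (x' : Fin 2 → ℝ) :
    (∑ j : Fin 3, (∑ k : Fin 3,
        u (emb x' (f x')) k * pd3 k (fun z => u z j) (emb x' (f x'))) * Nf f x' j)
      - (∑ j : Fin 3, pd3 2 (fun z => u z j) (emb x' (f x')) * Nf f x' j)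
        * (∑ j : Fin 3, u (emb x' (f x')) j * Nf f x' j)
    = u (emb x' (f x')) 0
        * pd2 0 (fun y => ∑ j : Fin 3, u (emb y (f y)) j * Nf f y j) x'
      + u (emb x' (f x')) 1
        * pd2 1 (fun y => ∑ j : Fin 3, u (emb y (f y)) j * Nf f y j) x'
      + ∑ i : Fin 2, ∑ j : Fin 2,
          u (emb x' (f x')) (Fin.castSucc i) * u (emb x' (f x')) (Fin.castSucc j)
            * pd2 i (fun y => pd2 j f y) x' := by
  have hfd : Differentiable ℝ f := hf.differentiable two_ne_zero
  have hu_j : ∀ j, Differentiable ℝ (fun z => u z j) := fun j =>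
    differentiable_pi.1 (hu.differentiable one_ne_zero) j
  have hubar : ∀ j, Differentiable ℝ (fun y => u (emb y (f y)) j) := fun j y =>
    (hu_j j _).comp y (hasFDerivAt_graph (hfd y)).differentiableAt
  have hpd2_dot : ∀ i, pd2 i (fun y => ∑ j : Fin 3, u (emb y (f y)) j * Nf f y j) x'
      = ∑ j : Fin 3, (u (emb x' (f x')) j * pd2 i (fun y => Nf f y j) x'
          + pd2 i (fun y => u (emb y (f y)) j) x' * Nf f x' j) := fun i =>
    pd2_sum_mul (a := fun j y => u (emb y (f y)) j) (b := fun j y => Nf f y j) Finset.univ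
      (fun j _ => hubar j x') (fun j _ => differentiable_Nf hf j x') i
  rw [hpd2_dot, hpd2_dot]
  simp only [Fin.sum_univ_castSucc (n := 2), pd2_Nf_castSucc, pd2_Nf_last,
    pd2_comp_graph (hfd x') (hu_j _ _)]
  simp only [Fin.sum_univ_two, Fin.castSucc_zero, Fin.castSucc_one,
    show Fin.last 2 = 2 from rfl, Nf, Matrix.cons_val_zero, Matrix.cons_val_one,
    Matrix.cons_val_two, Matrix.head_cons, Matrix.tail_cons]
  ring
end
end

section
/- Let u, h be C² time-dependent divergence-free vector fields on a neighborhood of Γ⁺ = 𝕋² × {1} with u₃ = h₃ = 0 on Γ⁺, and let ξ solve ∂_t ξ + u·∇ξ − h·∇ω = ξ·∇u − ω·∇h − 2∇u_i × ∇h_i. Then d/dt ∫_{Γ⁺} ξ₃ dx' = 0; in particular ∫_{Γ⁺}(∂₁u_i ∂₂h_i − ∂₂u_i ∂₁h_i) dx' = 0 for smooth periodic u, h. -/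
open MeasureTheory

noncomputable section

def Q2 : Set (Fin 2 → ℝ) := Set.Icc (fun _ => (0:ℝ)) (fun _ => 2*Real.pi)

def pt (g : ℝ × (Fin 3 → ℝ) → ℝ) (p : ℝ × (Fin 3 → ℝ)) : ℝ :=
  fderiv ℝ g p ((1 : ℝ), (0 : Fin 3 → ℝ))

def pxi (i : Fin 3) (g : ℝ × (Fin 3 → ℝ) → ℝ) (p : ℝ × (Fin 3 → ℝ)) : ℝ :=
  fderiv ℝ g p ((0 : ℝ), Pi.single i 1)

def levi (i j k : Fin 3) : ℝ :=
  (((i : ℕ) : ℝ) - ((j : ℕ) : ℝ)) * (((j : ℕ) : ℝ) - ((k : ℕ) : ℝ))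
    * (((k : ℕ) : ℝ) - ((i : ℕ) : ℝ)) / 2

def Per3 (F : ℝ × (Fin 3 → ℝ) → Fin 3 → ℝ) : Prop :=
  ∀ (t : ℝ) (x : Fin 3 → ℝ) (j : Fin 2),
    F (t, x + Pi.single (Fin.castSucc j) (2*Real.pi)) = F (t, x)

/-
On `Γ⁺` the tangency conditions `u₃ = h₃ = 0` also kill the horizontal derivatives of `u₃` and
`h₃`, so the third component of the equation, combined with `div u = div h = 0`, reads
`∂ₜξ₃ = -∂₁(u₁ξ₃) - ∂₂(u₂ξ₃) + ∂₁(h₁ω₃) + ∂₂(h₂ω₃) - 2 ∑ᵢ (∂₁uᵢ ∂₂hᵢ - ∂₂uᵢ ∂₁hᵢ)`.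
By symmetry of second derivatives `∂₁uᵢ ∂₂hᵢ - ∂₂uᵢ ∂₁hᵢ = ∂₁(uᵢ ∂₂hᵢ) - ∂₂(uᵢ ∂₁hᵢ)`, so every
term is a horizontal derivative of a periodic function and integrates to zero over a period
cell (divergence theorem on the box). Differentiating under the integral sign concludes.
-/

open Set

theorem hasDerivAt_setIntegral_of_continuous {X E : Type*} [TopologicalSpace X] [T2Space X]
    [MeasurableSpace X] [OpensMeasurableSpace X] [NormedAddCommGroup E] [NormedSpace ℝ E]
    [SecondCountableTopologyEither X E]
    {μ : Measure X} [IsFiniteMeasureOnCompacts μ] {K : Set X} (hK : IsCompact K)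
    {F F' : ℝ → X → E} (hF : ∀ τ, Continuous (F τ)) (hF' : Continuous (Function.uncurry F'))
    (hderiv : ∀ τ y, HasDerivAt (F · y) (F' τ y) τ) (t : ℝ) :
    HasDerivAt (fun τ => ∫ y in K, F τ y ∂μ) (∫ y in K, F' t y ∂μ) t := by
  obtain ⟨C, hC⟩ := (isCompact_closedBall t 1).prod hK |>.exists_bound_of_continuousOn
    hF'.continuousOn
  refine (hasDerivAt_integral_of_dominated_loc_of_deriv_le (bound := fun _ => C)
    (Metric.ball_mem_nhds t one_pos) (.of_forall fun τ => (hF τ).aestronglyMeasurable)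
    ((hF t).continuousOn.integrableOn_compact hK)
    (hF'.comp (Continuous.prodMk_right t)).aestronglyMeasurable
    (ae_restrict_of_forall_mem hK.measurableSet fun y hy τ hτ =>
      hC (τ, y) ⟨Metric.ball_subset_closedBall hτ, hy⟩)
    (integrableOn_const hK.measure_lt_top.ne)
    (ae_of_all _ fun y τ _ => hderiv τ y)).2

theorem Fin.insertNth_add_single {α : Type*} [AddZeroClass α] {n : ℕ} (j : Fin (n + 1))
    (c d : α) (x : Fin n → α) :
    j.insertNth (c + d) x = j.insertNth c x + Pi.single (M := fun _ => α) j d := by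
  ext i
  cases i using j.succAboveCases <;> simp [Fin.succAbove_ne]

theorem integral_Icc_fderiv_eq_zero_of_periodic {E : Type*} [NormedAddCommGroup E]
    [NormedSpace ℝ E] {n : ℕ} {a b : Fin (n + 1) → ℝ} (hle : a ≤ b)
    {f : (Fin (n + 1) → ℝ) → E} (hf : ContDiff ℝ 1 f) (j : Fin (n + 1))
    (hper : ∀ x, f (x + Pi.single j (b j - a j)) = f x) :
    ∫ x in Icc a b, fderiv ℝ f x (Pi.single j 1) = 0 := by
  have hsum : ∀ x, ∑ i, (if i = j then fderiv ℝ f x else 0) (Pi.single i 1)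
      = fderiv ℝ f x (Pi.single j 1) := fun x =>
    (Fintype.sum_eq_single j fun i hi => by simp [hi]).trans (by simp)
  have hdiv := integral_divergence_of_hasFDerivAt_off_countable' a b hle
    (fun i => if i = j then f else 0) (fun i x => if i = j then fderiv ℝ f x else 0) ∅
    countable_empty
    (fun i => by split_ifs <;> [exact hf.continuous.continuousOn; exact continuousOn_const])
    (fun x _ i => by
      split_ifs
      · exact (hf.differentiable one_ne_zero x).hasFDerivAt
      · exact hasFDerivAt_const 0 x)
    (by
      simpa only [hsum] using ((hf.continuous_fderiv one_ne_zero).clm_apply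
        continuous_const).continuousOn.integrableOn_compact isCompact_Icc)
  rw [Fintype.sum_eq_single j fun i hi => by simp [hi]] at hdiv
  have hfaces : ∀ x, f (j.insertNth (b j) x) = f (j.insertNth (a j) x) := fun x => by
    rw [← hper (j.insertNth (a j) x), ← Fin.insertNth_add_single, add_sub_cancel]
  simpa [hsum, hfaces] using hdiv

def IsTorusPeriodic {E : Type*} (f : (Fin 2 → ℝ) → E) : Prop :=
  ∀ x (j : Fin 2), f (x + Pi.single j (2 * Real.pi)) = f x

theorem IsTorusPeriodic.mul {f g : (Fin 2 → ℝ) → ℝ} (hf : IsTorusPeriodic f)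
    (hg : IsTorusPeriodic g) : IsTorusPeriodic (fun x => f x * g x) := fun x j => by
  simp only [hf x j, hg x j]

theorem IsTorusPeriodic.fderiv_apply {E : Type*} [NormedAddCommGroup E] [NormedSpace ℝ E]
    {f : (Fin 2 → ℝ) → E} (hf : IsTorusPeriodic f) (v : Fin 2 → ℝ) :
    IsTorusPeriodic (fun x => fderiv ℝ f x v) := fun x j => by
  simp only [← fderiv_comp_add_right, funext fun x => hf x j]

theorem integral_Q2_fderiv_eq_zero {E : Type*} [NormedAddCommGroup E] [NormedSpace ℝ E]
    {f : (Fin 2 → ℝ) → E} (hf : ContDiff ℝ 1 f) (hper : IsTorusPeriodic f) (j : Fin 2) :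
    ∫ x in Q2, fderiv ℝ f x (Pi.single j 1) = 0 :=
  integral_Icc_fderiv_eq_zero_of_periodic (fun _ => Real.two_pi_pos.le) hf j
    fun x => by simpa using hper x j

theorem fderiv_mul_fderiv_sub_fderiv_mul_fderiv {E : Type*} [NormedAddCommGroup E]
    [NormedSpace ℝ E] {φ ψ : E → ℝ} {x : E} (hφ : DifferentiableAt ℝ φ x)
    (hψ : ContDiff ℝ 2 ψ) (v w : E) :
    fderiv ℝ (fun y => φ y * fderiv ℝ ψ y w) x v - fderiv ℝ (fun y => φ y * fderiv ℝ ψ y v) x w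
      = fderiv ℝ φ x v * fderiv ℝ ψ x w - fderiv ℝ φ x w * fderiv ℝ ψ x v := by
  have hψ' : DifferentiableAt ℝ (fderiv ℝ ψ) x :=
    (hψ.fderiv_right (m := 1) le_rfl).differentiable one_ne_zero x
  have hsymm := hψ.contDiffAt.isSymmSndFDerivAt (x := x) (by simp) v w
  rw [fderiv_fun_mul hφ (hψ'.clm_apply (differentiableAt_const w)),
    fderiv_fun_mul hφ (hψ'.clm_apply (differentiableAt_const v)),
    fderiv_clm_apply hψ' (differentiableAt_const w),
    fderiv_clm_apply hψ' (differentiableAt_const v)]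
  simp only [add_apply, smul_apply, smul_eq_mul, fderiv_fun_const, Pi.zero_apply, zero_apply,
    map_zero, zero_add, ContinuousLinearMap.comp_apply, ContinuousLinearMap.flip_apply,
    hsymm]
  ring

theorem integral_Q2_jacobian_eq_zero {φ ψ : (Fin 2 → ℝ) → ℝ} (hφ : ContDiff ℝ 1 φ)
    (hψ : ContDiff ℝ 2 ψ) (hφp : IsTorusPeriodic φ) (hψp : IsTorusPeriodic ψ) :
    ∫ x in Q2, (fderiv ℝ φ x (Pi.single 0 1) * fderiv ℝ ψ x (Pi.single 1 1)
      - fderiv ℝ φ x (Pi.single 1 1) * fderiv ℝ ψ x (Pi.single 0 1)) = 0 := by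
  have hflux : ∀ v, ContDiff ℝ 1 (fun y => φ y * fderiv ℝ ψ y v) := fun v =>
    hφ.mul ((hψ.fderiv_right (m := 1) le_rfl).clm_apply contDiff_const)
  have hint : ∀ v w, IntegrableOn (fun x => fderiv ℝ (fun y => φ y * fderiv ℝ ψ y v) x w) Q2 :=
    fun v w => ((hflux v).continuous_fderiv one_ne_zero |>.clm_apply
      continuous_const).integrableOn_Icc
  simp_rw [← fderiv_mul_fderiv_sub_fderiv_mul_fderiv (hφ.differentiable one_ne_zero _) hψ]
  rw [integral_sub (hint _ _) (hint _ _),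
    integral_Q2_fderiv_eq_zero (hflux _) (hφp.mul (hψp.fderiv_apply _)),
    integral_Q2_fderiv_eq_zero (hflux _) (hφp.mul (hψp.fderiv_apply _)), sub_zero]

def horizontalEmb : (Fin 2 → ℝ) →L[ℝ] (Fin 3 → ℝ) :=
  ContinuousLinearMap.pi ![ContinuousLinearMap.proj 0, ContinuousLinearMap.proj 1, 0]

theorem emb_eq_horizontalEmb_add (y : Fin 2 → ℝ) (z : ℝ) :
    emb y z = horizontalEmb y + Pi.single 2 z := by
  ext i; fin_cases i <;> simp [emb, horizontalEmb]

theorem horizontalEmb_single (j : Fin 2) (a : ℝ) :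
    horizontalEmb (Pi.single j a) = Pi.single j.castSucc a := by
  ext i; fin_cases j <;> fin_cases i <;> simp [horizontalEmb]

theorem emb_add_single (y : Fin 2 → ℝ) (j : Fin 2) (a z : ℝ) :
    emb (y + Pi.single j a) z = emb y z + Pi.single j.castSucc a := by
  rw [emb_eq_horizontalEmb_add, emb_eq_horizontalEmb_add, map_add, horizontalEmb_single]
  abel

theorem continuous_time_emb (z : ℝ) :
    Continuous (fun p : ℝ × (Fin 2 → ℝ) => ((p.1, emb p.2 z) : ℝ × (Fin 3 → ℝ))) := by
  simp only [emb_eq_horizontalEmb_add]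
  fun_prop

theorem hasFDerivAt_time_emb (t z : ℝ) (y : Fin 2 → ℝ) :
    HasFDerivAt (fun y => ((t, emb y z) : ℝ × (Fin 3 → ℝ)))
      ((0 : (Fin 2 → ℝ) →L[ℝ] ℝ).prod horizontalEmb) y := by
  simp only [emb_eq_horizontalEmb_add]
  exact (hasFDerivAt_const t y).prodMk (horizontalEmb.hasFDerivAt.add_const _)

theorem Per3.isTorusPeriodic {F : ℝ × (Fin 3 → ℝ) → Fin 3 → ℝ} (hF : Per3 F) (t z : ℝ)
    (i : Fin 3) : IsTorusPeriodic (fun y => F (t, emb y z) i) := fun y j => by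
  simpa only [emb_add_single] using congrFun (hF t (emb y z) j) i

section TimeSlice

variable {g : ℝ × (Fin 3 → ℝ) → ℝ} {t z : ℝ}

theorem ContDiff.comp_time_emb {n : WithTop ℕ∞} (hg : ContDiff ℝ n g) :
    ContDiff ℝ n (fun y => g (t, emb y z)) := by
  simp only [emb_eq_horizontalEmb_add]
  exact hg.comp (contDiff_const.prodMk (horizontalEmb.contDiff.add contDiff_const))

theorem fderiv_comp_time_emb_single {y : Fin 2 → ℝ} (hg : DifferentiableAt ℝ g (t, emb y z))
    (j : Fin 2) :
    fderiv ℝ (fun y => g (t, emb y z)) y (Pi.single j 1) = pxi j.castSucc g (t, emb y z) := by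
  have hcomp : HasFDerivAt (fun y => g (t, emb y z)) _ y :=
    hg.hasFDerivAt.comp y (hasFDerivAt_time_emb t z y)
  simp [hcomp.fderiv, pxi, horizontalEmb_single]

theorem pxi_eq_zero_of_comp_time_emb_eq_zero (hg : Differentiable ℝ g)
    (h0 : ∀ y, g (t, emb y z) = 0) (j : Fin 2) (y : Fin 2 → ℝ) :
    pxi j.castSucc g (t, emb y z) = 0 := by
  rw [← fderiv_comp_time_emb_single (hg _), funext h0]
  simp

theorem hasDerivAt_integral_Q2_comp_time_emb (hg : ContDiff ℝ 1 g) (t : ℝ) :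
    HasDerivAt (fun τ => ∫ y in Q2, g (τ, emb y z)) (∫ y in Q2, pt g (t, emb y z)) t :=
  hasDerivAt_setIntegral_of_continuous isCompact_Icc
    (fun τ => hg.continuous.comp ((continuous_time_emb z).comp (Continuous.prodMk_right τ)))
    (((hg.continuous_fderiv one_ne_zero).comp (continuous_time_emb z)).clm_apply
      continuous_const)
    (fun τ y => (hg.differentiable one_ne_zero _).hasFDerivAt.comp_hasDerivAt τ
      ((hasDerivAt_id τ).prodMk (hasDerivAt_const τ (emb y z))))
    t

theorem continuous_pxi_comp_time_emb (hg : ContDiff ℝ 1 g) (i : Fin 3) :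
    Continuous (fun y => pxi i g (t, emb y z)) :=
  ((hg.continuous_fderiv one_ne_zero).comp
    ((continuous_time_emb z).comp (Continuous.prodMk_right t))).clm_apply continuous_const

theorem integral_Q2_pxi_eq_zero (hg : ContDiff ℝ 1 g)
    (hgp : IsTorusPeriodic fun y => g (t, emb y z)) (j : Fin 2) :
    ∫ y in Q2, pxi j.castSucc g (t, emb y z) = 0 := by
  simpa only [fderiv_comp_time_emb_single (hg.differentiable one_ne_zero _)] using
    integral_Q2_fderiv_eq_zero hg.comp_time_emb hgp j

theorem integral_Q2_forcing_eq_zero {U H : ℝ × (Fin 3 → ℝ) → Fin 3 → ℝ} (hU : ContDiff ℝ 1 U)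
    (hH : ContDiff ℝ 2 H) (hUp : Per3 U) (hHp : Per3 H) :
    ∫ y in Q2, ∑ i : Fin 3,
      (pxi 0 (fun q => U q i) (t, emb y z) * pxi 1 (fun q => H q i) (t, emb y z)
        - pxi 1 (fun q => U q i) (t, emb y z) * pxi 0 (fun q => H q i) (t, emb y z)) = 0 := by
  have hUi := contDiff_pi.1 hU
  have hHi i := (contDiff_pi.1 hH i).of_le one_le_two
  have hint : ∀ i : Fin 3, IntegrableOn (fun y =>
      pxi 0 (fun q => U q i) (t, emb y z) * pxi 1 (fun q => H q i) (t, emb y z)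
        - pxi 1 (fun q => U q i) (t, emb y z) * pxi 0 (fun q => H q i) (t, emb y z)) Q2 :=
    fun i => Continuous.integrableOn_Icc <|
      ((continuous_pxi_comp_time_emb (hUi i) 0).mul (continuous_pxi_comp_time_emb (hHi i) 1)).sub
      ((continuous_pxi_comp_time_emb (hUi i) 1).mul (continuous_pxi_comp_time_emb (hHi i) 0))
  rw [integral_finsetSum _ fun i _ => hint i]
  refine Finset.sum_eq_zero fun i _ => ?_
  simpa only [fderiv_comp_time_emb_single ((hUi i).differentiable one_ne_zero _),
    fderiv_comp_time_emb_single ((contDiff_pi.1 hH i).differentiable two_ne_zero _),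
    Fin.castSucc_zero, Fin.castSucc_one] using
    integral_Q2_jacobian_eq_zero (hUi i).comp_time_emb (contDiff_pi.1 hH i).comp_time_emb
      (hUp.isTorusPeriodic t z i) (hHp.isTorusPeriodic t z i)

end TimeSlice

theorem pxi_mul {a b : ℝ × (Fin 3 → ℝ) → ℝ} {p : ℝ × (Fin 3 → ℝ)}
    (ha : DifferentiableAt ℝ a p) (hb : DifferentiableAt ℝ b p) (j : Fin 3) :
    pxi j (fun q => a q * b q) p = pxi j a p * b p + a p * pxi j b p := by
  simp only [pxi, fderiv_fun_mul ha hb, add_apply, smul_apply, smul_eq_mul]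
  ring

theorem pt_eq_horizontal_div_of_tangent {ω ζ u h : ℝ × (Fin 3 → ℝ) → Fin 3 → ℝ}
    {p : ℝ × (Fin 3 → ℝ)} (hω : DifferentiableAt ℝ ω p) (hζ : DifferentiableAt ℝ ζ p)
    (hu : DifferentiableAt ℝ u p) (hh : DifferentiableAt ℝ h p)
    (heq : pt (fun q => ζ q 2) p
        + ∑ j : Fin 3, (u p j * pxi j (fun q => ζ q 2) p - h p j * pxi j (fun q => ω q 2) p)
      = (∑ j : Fin 3, (ζ p j * pxi j (fun q => u q 2) p - ω p j * pxi j (fun q => h q 2) p))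
        - 2 * ∑ l : Fin 3, ∑ j : Fin 3, ∑ k : Fin 3,
            levi 2 j k * pxi j (fun q => u q l) p * pxi k (fun q => h q l) p)
    (hdivu : ∑ i : Fin 3, pxi i (fun q => u q i) p = 0)
    (hdivh : ∑ i : Fin 3, pxi i (fun q => h q i) p = 0)
    (hu₂ : u p 2 = 0) (hh₂ : h p 2 = 0)
    (hu₀₂ : pxi 0 (fun q => u q 2) p = 0) (hu₁₂ : pxi 1 (fun q => u q 2) p = 0)
    (hh₀₂ : pxi 0 (fun q => h q 2) p = 0) (hh₁₂ : pxi 1 (fun q => h q 2) p = 0) :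
    pt (fun q => ζ q 2) p
      = -pxi 0 (fun q => u q 0 * ζ q 2) p - pxi 1 (fun q => u q 1 * ζ q 2) p
        + pxi 0 (fun q => h q 0 * ω q 2) p + pxi 1 (fun q => h q 1 * ω q 2) p
        - 2 * ∑ l : Fin 3, (pxi 0 (fun q => u q l) p * pxi 1 (fun q => h q l) p
          - pxi 1 (fun q => u q l) p * pxi 0 (fun q => h q l) p) := by
  have hc {F : ℝ × (Fin 3 → ℝ) → Fin 3 → ℝ} (hF : DifferentiableAt ℝ F p) (i : Fin 3) :
      DifferentiableAt ℝ (fun q => F q i) p := differentiableAt_pi.1 hF i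
  simp only [pxi_mul (hc hu _) (hc hζ _), pxi_mul (hc hh _) (hc hω _)]
  simp only [Fin.sum_univ_three] at heq hdivu hdivh ⊢
  simp only [hu₂, hh₂, hu₀₂, hu₁₂, hh₀₂, hh₁₂] at heq ⊢
  norm_num [levi] at heq
  -- on `Γ⁺` the stretching terms reduce to `ζ₃ ∂₃u₃ - ω₃ ∂₃h₃`; trade `∂₃` for `-∂₁ - ∂₂`
  linear_combination heq + ζ p 2 * hdivu - ω p 2 * hdivh

theorem integral_Q2_horizontal_div_eq_zero {ω ζ u h : ℝ × (Fin 3 → ℝ) → Fin 3 → ℝ}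
    (hω : ContDiff ℝ 1 ω) (hζ : ContDiff ℝ 1 ζ) (hu : ContDiff ℝ 1 u) (hh : ContDiff ℝ 2 h)
    (hperω : Per3 ω) (hperζ : Per3 ζ) (hperu : Per3 u) (hperh : Per3 h) (t z : ℝ) :
    ∫ y in Q2, (-pxi 0 (fun q => u q 0 * ζ q 2) (t, emb y z)
        - pxi 1 (fun q => u q 1 * ζ q 2) (t, emb y z)
        + pxi 0 (fun q => h q 0 * ω q 2) (t, emb y z)
        + pxi 1 (fun q => h q 1 * ω q 2) (t, emb y z)
        - 2 * ∑ l : Fin 3,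
          (pxi 0 (fun q => u q l) (t, emb y z) * pxi 1 (fun q => h q l) (t, emb y z)
            - pxi 1 (fun q => u q l) (t, emb y z) * pxi 0 (fun q => h q l) (t, emb y z))) = 0 := by
  have hh₁ : ContDiff ℝ 1 h := hh.of_le one_le_two
  have hc {F : ℝ × (Fin 3 → ℝ) → Fin 3 → ℝ} (hF : ContDiff ℝ 1 F) (i : Fin 3) :
      ContDiff ℝ 1 (fun q => F q i) := contDiff_pi.1 hF i
  have hflux {a b : ℝ × (Fin 3 → ℝ) → Fin 3 → ℝ} (ha : ContDiff ℝ 1 a) (hb : ContDiff ℝ 1 b)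
      (hap : Per3 a) (hbp : Per3 b) (i : Fin 3) (j : Fin 2) :
      IntegrableOn (fun y => pxi j.castSucc (fun q => a q i * b q 2) (t, emb y z)) Q2 ∧
      ∫ y in Q2, pxi j.castSucc (fun q => a q i * b q 2) (t, emb y z) = 0 :=
    ⟨(continuous_pxi_comp_time_emb ((hc ha i).mul (hc hb 2)) _).integrableOn_Icc,
      integral_Q2_pxi_eq_zero ((hc ha i).mul (hc hb 2))
        ((hap.isTorusPeriodic t z i).mul (hbp.isTorusPeriodic t z 2)) j⟩
  obtain ⟨i₁, z₁⟩ := hflux hu hζ hperu hperζ 0 0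
  obtain ⟨i₂, z₂⟩ := hflux hu hζ hperu hperζ 1 1
  obtain ⟨i₃, z₃⟩ := hflux hh₁ hω hperh hperω 0 0
  obtain ⟨i₄, z₄⟩ := hflux hh₁ hω hperh hperω 1 1
  have i₅ : IntegrableOn (fun y => ∑ l : Fin 3,
      (pxi 0 (fun q => u q l) (t, emb y z) * pxi 1 (fun q => h q l) (t, emb y z)
        - pxi 1 (fun q => u q l) (t, emb y z) * pxi 0 (fun q => h q l) (t, emb y z))) Q2 :=
    Continuous.integrableOn_Icc <| continuous_finsetSum _ fun l _ =>
      ((continuous_pxi_comp_time_emb (hc hu l) 0).mul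
        (continuous_pxi_comp_time_emb (hc hh₁ l) 1)).sub
      ((continuous_pxi_comp_time_emb (hc hu l) 1).mul
        (continuous_pxi_comp_time_emb (hc hh₁ l) 0))
  simp only [Fin.castSucc_zero, Fin.castSucc_one] at i₁ i₂ i₃ i₄ z₁ z₂ z₃ z₄
  rw [integral_sub, integral_add, integral_add, integral_sub, integral_neg, integral_const_mul,
    z₁, z₂, z₃, z₄, integral_Q2_forcing_eq_zero hu hh hperu hperh]
  · norm_num
  exacts [i₁.neg, i₂, i₁.neg.sub i₂, i₃, (i₁.neg.sub i₂).add i₃, i₄,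
    ((i₁.neg.sub i₂).add i₃).add i₄, i₅.const_mul 2]

/-- Conservation of `∫_{Γ⁺} ξ₃ dx'` for the linearized current equation with
forcing `−2∇u_i × ∇h_i`; in particular the forcing integral
`∫(∂₁u_i ∂₂h_i − ∂₂u_i ∂₁h_i) dx'` vanishes. -/
theorem stmt7 (ω ζ u h : ℝ × (Fin 3 → ℝ) → Fin 3 → ℝ)
    (hω : ContDiff ℝ 1 ω) (hζ : ContDiff ℝ 1 ζ)
    (hu : ContDiff ℝ 2 u) (hh : ContDiff ℝ 2 h)
    (hperω : Per3 ω) (hperζ : Per3 ζ) (hperu : Per3 u) (hperh : Per3 h)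
    (heq : ∀ p : ℝ × (Fin 3 → ℝ), p.2 2 ∈ Set.Icc (-1 : ℝ) 1 → ∀ i : Fin 3,
      pt (fun q => ζ q i) p
        + ∑ j : Fin 3, (u p j * pxi j (fun q => ζ q i) p
            - h p j * pxi j (fun q => ω q i) p)
      = (∑ j : Fin 3, (ζ p j * pxi j (fun q => u q i) p
            - ω p j * pxi j (fun q => h q i) p))
        - 2 * ∑ l : Fin 3, ∑ j : Fin 3, ∑ k : Fin 3,
            levi i j k * pxi j (fun q => u q l) p * pxi k (fun q => h q l) p)
    (hdivu : ∀ p : ℝ × (Fin 3 → ℝ), p.2 2 ∈ Set.Icc (-1 : ℝ) 1 →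
      (∑ i : Fin 3, pxi i (fun q => u q i) p) = 0)
    (hdivh : ∀ p : ℝ × (Fin 3 → ℝ), p.2 2 ∈ Set.Icc (-1 : ℝ) 1 →
      (∑ i : Fin 3, pxi i (fun q => h q i) p) = 0)
    (hbu : ∀ (t : ℝ) (x' : Fin 2 → ℝ), u (t, emb x' 1) 2 = 0)
    (hbh : ∀ (t : ℝ) (x' : Fin 2 → ℝ), h (t, emb x' 1) 2 = 0) :
    (∀ t : ℝ, HasDerivAt (fun τ => ∫ x' in Q2, ζ (τ, emb x' 1) 2) 0 t)
    ∧ ∀ t : ℝ, (∫ x' in Q2, (∑ i : Fin 3,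
        (pxi 0 (fun q => u q i) (t, emb x' 1) * pxi 1 (fun q => h q i) (t, emb x' 1)
          - pxi 1 (fun q => u q i) (t, emb x' 1)
            * pxi 0 (fun q => h q i) (t, emb x' 1)))) = 0 := by
  have hu₁ : ContDiff ℝ 1 u := hu.of_le one_le_two
  have hh₁ : ContDiff ℝ 1 h := hh.of_le one_le_two
  have hd {F : ℝ × (Fin 3 → ℝ) → Fin 3 → ℝ} (hF : ContDiff ℝ 1 F) : Differentiable ℝ F :=
    hF.differentiable one_ne_zero
  have htop (y : Fin 2 → ℝ) : (emb y 1) 2 ∈ Set.Icc (-1 : ℝ) 1 := by simp [emb]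
  have htangent {F : ℝ × (Fin 3 → ℝ) → Fin 3 → ℝ} (hF : ContDiff ℝ 1 F)
      (hF₂ : ∀ t y, F (t, emb y 1) 2 = 0) (t : ℝ) (j : Fin 2) (y : Fin 2 → ℝ) :
      pxi j.castSucc (fun q => F q 2) (t, emb y 1) = 0 :=
    pxi_eq_zero_of_comp_time_emb_eq_zero (differentiable_pi.1 (hd hF) 2) (hF₂ t) j y
  refine ⟨fun t => ?_, fun t => integral_Q2_forcing_eq_zero hu₁ hh hperu hperh⟩
  have hmean : ∫ y in Q2, pt (fun q => ζ q 2) (t, emb y 1) = 0 := by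
    rw [setIntegral_congr_fun (s := Q2) measurableSet_Icc fun y _ =>
      pt_eq_horizontal_div_of_tangent (hd hω _) (hd hζ _) (hd hu₁ _) (hd hh₁ _)
        (heq _ (htop y) 2) (hdivu _ (htop y)) (hdivh _ (htop y)) (hbu t y) (hbh t y)
        (htangent hu₁ hbu t 0 y) (htangent hu₁ hbu t 1 y)
        (htangent hh₁ hbh t 0 y) (htangent hh₁ hbh t 1 y)]
    exact integral_Q2_horizontal_div_eq_zero hω hζ hu₁ hh hperω hperζ hperu hperh t 1
  exact hmean ▸ hasDerivAt_integral_Q2_comp_time_emb (contDiff_pi.1 hζ 2) t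
end
end
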